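/- Let F : (0,∞) → ℝ be differentiable with σ_F(x) := sup_{y ≥ x} |F(y)| finite for all x > 0 and |F'| integrable; set σ_{1F}(x) := ∫_x^∞ σ_F(y) dy and σ_{2F}(x) := ∫_x^∞ |F'(y)| dy. Let 0 ≤ δ < 1 and x ≥ 0 with σ_{1F}(2x) ≤ δ. Suppose A(x,·) is bounded, satisfies the Marchenko equation A(x,y) + ∫_x^∞ A(x,t) F(t+y) dt = −F(x+y) for y ≥ x, and a function A_x(x,·) ∈ L¹(x,∞) satisfies the differentiated equation A_x(x,y) + ∫_x^∞ A_x(x,t) F(t+y) dt = A(x,x) F(x+y) − F'(x+y) for y ≥ x. Then ∫_x^∞ |A_x(x,y)| dy ≤ (1−δ)^{-1} [ σ_{2F}(2x) + (1−δ)^{-1} σ_F(2x) σ_{1F}(2x) ]. -/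

import Mathlib

open MeasureTheory Set Filter

/-- `σ_F(x) := sup_{y ≥ x} |F(y)|`. -/
noncomputable def sigmaF (F : ℝ → ℝ) (x : ℝ) : ℝ :=
  sSup ((fun y => |F y|) '' Set.Ici x)

/-!
Bounding `|F|` by `σ_F`, the kernel `t ↦ F (t + y)` has `L¹(x, ∞)` norm at most
`‖F‖ := ∫_{2x}^∞ |F| ≤ σ_{1F}(2x) ≤ δ` for every `y ≥ x`. The Marchenko equation then gives
`sup |A| ≤ σ_F(2x) + δ sup |A|`, hence `|A(x,x)| ≤ (1 - δ)⁻¹ σ_F(2x)`. Taking absolute values in the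
differentiated equation and integrating in `y`, Fubini bounds the integral term by `‖F‖ ∫ |A_x|`, so
`(1 - δ) ∫ |A_x| ≤ |A(x,x)| σ_{1F}(2x) + σ_{2F}(2x)`.
-/

theorem integral_Ioi_comp_const_add {E : Type*} [NormedAddCommGroup E] [NormedSpace ℝ E]
    (g : ℝ → E) (a c : ℝ) : ∫ y in Ioi a, g (c + y) = ∫ u in Ioi (c + a), g u := by
  have h := (measurePreserving_add_left volume c).setIntegral_preimage_emb
    (measurableEmbedding_addLeft c) g (Ioi (c + a))
  rwa [preimage_const_add_Ioi, add_sub_cancel_left] at h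

theorem MeasureTheory.IntegrableOn.comp_const_add_Ioi {E : Type*} [NormedAddCommGroup E]
    {g : ℝ → E} {a c : ℝ} (hg : IntegrableOn g (Ioi (c + a))) :
    IntegrableOn (fun y => g (c + y)) (Ioi a) := by
  rwa [← (measurePreserving_add_left volume c).integrableOn_comp_preimage
    (measurableEmbedding_addLeft c), preimage_const_add_Ioi, add_sub_cancel_left] at hg

theorem abs_integral_mul_le_of_abs_le {α : Type*} [MeasurableSpace α] {μ : Measure α}
    {f g : α → ℝ} {M : ℝ} (hf : ∀ᵐ t ∂μ, |f t| ≤ M) (hg : Integrable g μ) :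
    |∫ t, f t * g t ∂μ| ≤ M * ∫ t, |g t| ∂μ :=
  calc |∫ t, f t * g t ∂μ| ≤ ∫ t, |f t * g t| ∂μ := abs_integral_le_integral_abs
    _ ≤ ∫ t, M * |g t| ∂μ :=
      integral_mono_of_nonneg (Eventually.of_forall fun _ => abs_nonneg _)
        (hg.abs.const_mul M) (hf.mono fun t ht => by
          dsimp only; rw [abs_mul]; exact mul_le_mul_of_nonneg_right ht (abs_nonneg _))
    _ = M * ∫ t, |g t| ∂μ := integral_const_mul M _

section Tail

variable {F : ℝ → ℝ} {x c : ℝ}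

theorem MeasureTheory.IntegrableOn.comp_const_add_Ioi_of_two_mul
    (hF : IntegrableOn F (Ioi (2 * x))) (hc : x ≤ c) : IntegrableOn (fun y => F (c + y)) (Ioi x) :=
  (hF.mono_set (Ioi_subset_Ioi (by linarith))).comp_const_add_Ioi

theorem integral_abs_comp_const_add_le (hF : IntegrableOn F (Ioi (2 * x))) (hc : x ≤ c) :
    ∫ y in Ioi x, |F (c + y)| ≤ ∫ u in Ioi (2 * x), |F u| := by
  rw [integral_Ioi_comp_const_add (fun u => |F u|)]
  exact setIntegral_mono_set hF.abs (Eventually.of_forall fun _ => abs_nonneg _)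
    (Ioi_subset_Ioi (by linarith)).eventuallyLE

theorem integral_abs_mul_comp_const_add_le (hF : IntegrableOn F (Ioi (2 * x))) (hc : x ≤ c)
    (a : ℝ) : ∫ y in Ioi x, |a * F (c + y)| ≤ |a| * ∫ u in Ioi (2 * x), |F u| := by
  simp_rw [abs_mul]
  rw [integral_const_mul]
  exact mul_le_mul_of_nonneg_left (integral_abs_comp_const_add_le hF hc) (abs_nonneg a)

end Tail

section SigmaF

variable {F : ℝ → ℝ} {a b : ℝ}

theorem abs_le_sigmaF (hF : BddAbove ((fun y => |F y|) '' Ici a)) {v : ℝ} (hv : a ≤ v) :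
    |F v| ≤ sigmaF F a :=
  le_csSup hF ⟨v, hv, rfl⟩

theorem sigmaF_nonneg (hF : BddAbove ((fun y => |F y|) '' Ici a)) : 0 ≤ sigmaF F a :=
  (abs_nonneg _).trans (abs_le_sigmaF hF le_rfl)

theorem abs_le_sigmaF_self (hFbdd : ∀ v > 0, BddAbove ((fun y => |F y|) '' Ici v))
    (hb : 0 ≤ b) : ∀ v ∈ Ioi b, |F v| ≤ sigmaF F v :=
  fun v hv => abs_le_sigmaF (hFbdd v (hb.trans_lt hv)) le_rfl

theorem integrableOn_Ioi_of_sigmaF (hFmeas : Measurable F)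
    (hFbdd : ∀ v > 0, BddAbove ((fun y => |F y|) '' Ici v)) (hb : 0 ≤ b)
    (hσ : IntegrableOn (sigmaF F) (Ioi b)) : IntegrableOn F (Ioi b) :=
  hσ.mono' hFmeas.aestronglyMeasurable
    (ae_restrict_of_forall_mem measurableSet_Ioi (abs_le_sigmaF_self hFbdd hb))

theorem integral_abs_le_integral_sigmaF
    (hFbdd : ∀ v > 0, BddAbove ((fun y => |F y|) '' Ici v)) (hb : 0 ≤ b)
    (hσ : IntegrableOn (sigmaF F) (Ioi b)) :
    ∫ u in Ioi b, |F u| ≤ ∫ u in Ioi b, sigmaF F u :=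
  integral_mono_of_nonneg (Eventually.of_forall fun _ => abs_nonneg _) hσ
    (ae_restrict_of_forall_mem measurableSet_Ioi (abs_le_sigmaF_self hFbdd hb))

end SigmaF

section Marchenko

variable {F A : ℝ → ℝ} {x : ℝ}

theorem abs_integral_mul_comp_add_le (hF : IntegrableOn F (Ioi (2 * x)))
    (hA : BddAbove ((fun y => |A y|) '' Ici x)) {y : ℝ} (hy : x ≤ y) :
    |∫ t in Ioi x, A t * F (t + y)| ≤ sigmaF A x * ∫ u in Ioi (2 * x), |F u| := by
  simp_rw [add_comm _ y]
  exact (abs_integral_mul_le_of_abs_le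
    (ae_restrict_of_forall_mem measurableSet_Ioi fun t ht => abs_le_sigmaF hA (le_of_lt ht))
    (hF.comp_const_add_Ioi_of_two_mul hy)).trans
    (mul_le_mul_of_nonneg_left (integral_abs_comp_const_add_le hF hy) (sigmaF_nonneg hA))

/-- When `x = 0` the hypotheses on `σ_F` do not bound `F` near `2x`; the equation does. -/
theorem bddAbove_abs_of_marchenko (hF : IntegrableOn F (Ioi (2 * x)))
    (hA : BddAbove ((fun y => |A y|) '' Ici x))
    (heq : ∀ y ≥ x, A y + ∫ t in Ioi x, A t * F (t + y) = -F (x + y)) :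
    BddAbove ((fun u => |F u|) '' Ici (2 * x)) := by
  refine ⟨sigmaF A x + sigmaF A x * ∫ u in Ioi (2 * x), |F u|, ?_⟩
  rintro _ ⟨u, hu, rfl⟩
  have hy : x ≤ u - x := by linarith [mem_Ici.1 hu]
  have h := heq (u - x) hy
  rw [add_sub_cancel] at h
  calc |F u| = |A (u - x) + ∫ t in Ioi x, A t * F (t + (u - x))| := by rw [h, abs_neg]
    _ ≤ _ := (abs_add_le _ _).trans
      (add_le_add (abs_le_sigmaF hA hy) (abs_integral_mul_comp_add_le hF hA hy))

theorem sigmaF_mul_one_sub_le_of_marchenko (hF : IntegrableOn F (Ioi (2 * x)))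
    (hA : BddAbove ((fun y => |A y|) '' Ici x))
    (heq : ∀ y ≥ x, A y + ∫ t in Ioi x, A t * F (t + y) = -F (x + y)) :
    sigmaF A x * (1 - ∫ u in Ioi (2 * x), |F u|) ≤ sigmaF F (2 * x) := by
  have hFbdd := bddAbove_abs_of_marchenko hF hA heq
  have hsup : sigmaF A x ≤ sigmaF F (2 * x) + sigmaF A x * ∫ u in Ioi (2 * x), |F u| := by
    refine csSup_le ⟨|A x|, x, mem_Ici.2 le_rfl, rfl⟩ ?_
    rintro _ ⟨y, hy, rfl⟩
    calc |A y| = |F (x + y) + ∫ t in Ioi x, A t * F (t + y)| := by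
          rw [show A y = -(F (x + y) + ∫ t in Ioi x, A t * F (t + y)) by
            linarith [heq y hy], abs_neg]
      _ ≤ _ := (abs_add_le _ _).trans (add_le_add
          (abs_le_sigmaF hFbdd (by linarith [mem_Ici.1 hy]))
          (abs_integral_mul_comp_add_le hF hA hy))
  rw [mul_sub, mul_one]
  linarith

end Marchenko

section Fubini

variable {f K : ℝ → ℝ} {x : ℝ}

theorem integrable_mul_comp_add_prod (hf : IntegrableOn f (Ioi x)) (hKmeas : Measurable K)
    (hK : IntegrableOn K (Ioi (2 * x))) :
    Integrable (fun p : ℝ × ℝ => f p.1 * K (p.1 + p.2))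
      ((volume.restrict (Ioi x)).prod (volume.restrict (Ioi x))) := by
  have hmeas : AEStronglyMeasurable (fun p : ℝ × ℝ => f p.1 * K (p.1 + p.2))
      ((volume.restrict (Ioi x)).prod (volume.restrict (Ioi x))) :=
    (hf.aestronglyMeasurable.comp_quasiMeasurePreserving
      Measure.quasiMeasurePreserving_fst).mul (hKmeas.comp measurable_add).aestronglyMeasurable
  refine (integrable_prod_iff hmeas).2 ⟨?_, ?_⟩
  · filter_upwards [ae_restrict_mem measurableSet_Ioi] with t ht
    exact (hK.comp_const_add_Ioi_of_two_mul ht.le).const_mul (f t)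
  · refine (hf.abs.mul_const (∫ u in Ioi (2 * x), |K u|)).mono'
      hmeas.norm.integral_prod_right' ?_
    filter_upwards [ae_restrict_mem measurableSet_Ioi] with t ht
    rw [Real.norm_of_nonneg (integral_nonneg fun _ => norm_nonneg _)]
    simpa only [Real.norm_eq_abs] using integral_abs_mul_comp_const_add_le hK ht.le (f t)

theorem integrable_integral_abs_mul_comp_add (hf : IntegrableOn f (Ioi x))
    (hKmeas : Measurable K) (hK : IntegrableOn K (Ioi (2 * x))) :
    IntegrableOn (fun y => ∫ t in Ioi x, |f t * K (t + y)|) (Ioi x) :=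
  (integrable_mul_comp_add_prod hf hKmeas hK).abs.integral_prod_right

theorem integral_integral_abs_mul_comp_add_le (hf : IntegrableOn f (Ioi x))
    (hKmeas : Measurable K) (hK : IntegrableOn K (Ioi (2 * x))) :
    ∫ y in Ioi x, ∫ t in Ioi x, |f t * K (t + y)| ≤
      (∫ u in Ioi (2 * x), |K u|) * ∫ t in Ioi x, |f t| := by
  rw [← integral_integral_swap (f := fun t y => |f t * K (t + y)|)
    (integrable_mul_comp_add_prod hf hKmeas hK).abs]
  calc ∫ t in Ioi x, ∫ y in Ioi x, |f t * K (t + y)|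
      ≤ ∫ t in Ioi x, |f t| * ∫ u in Ioi (2 * x), |K u| :=
        integral_mono_of_nonneg (Eventually.of_forall fun _ => integral_nonneg fun _ =>
          abs_nonneg _) (hf.abs.mul_const _) (ae_restrict_of_forall_mem measurableSet_Ioi
          fun t ht => integral_abs_mul_comp_const_add_le hK (le_of_lt ht) (f t))
    _ = _ := by rw [integral_mul_const, mul_comm]

end Fubini

theorem integral_abs_le_of_marchenko_deriv {F F' Ax : ℝ → ℝ} {x a : ℝ} (hFmeas : Measurable F)
    (hF : IntegrableOn F (Ioi (2 * x))) (hF' : IntegrableOn (fun u => |F' u|) (Ioi (2 * x)))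
    (hAx : IntegrableOn Ax (Ioi x))
    (heq' : ∀ y ≥ x, Ax y + ∫ t in Ioi x, Ax t * F (t + y) = a * F (x + y) - F' (x + y)) :
    ∫ y in Ioi x, |Ax y| ≤ |a| * (∫ u in Ioi (2 * x), |F u|) + (∫ u in Ioi (2 * x), |F' u|) +
      (∫ u in Ioi (2 * x), |F u|) * ∫ y in Ioi x, |Ax y| := by
  have hpt : ∀ y ≥ x, |Ax y| ≤
      |a| * |F (x + y)| + |F' (x + y)| + ∫ t in Ioi x, |Ax t * F (t + y)| := by
    intro y hy
    rw [show Ax y = a * F (x + y) - F' (x + y) - ∫ t in Ioi x, Ax t * F (t + y) by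
      linarith [heq' y hy], ← abs_mul]
    exact (abs_sub _ _).trans (add_le_add (abs_sub _ _) abs_integral_le_integral_abs)
  have hF₁ := (hF.comp_const_add_Ioi_of_two_mul (le_refl x)).abs.const_mul |a|
  have hF'₁ := hF'.comp_const_add_Ioi_of_two_mul (le_refl x)
  have hF₁₂ : IntegrableOn (fun y => |a| * |F (x + y)| + |F' (x + y)|) (Ioi x) := hF₁.add hF'₁
  have hJ := integrable_integral_abs_mul_comp_add hAx hFmeas hF
  have hF'eq : ∫ y in Ioi x, |F' (x + y)| = ∫ u in Ioi (2 * x), |F' u| := by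
    rw [integral_Ioi_comp_const_add (fun u => |F' u|), two_mul]
  calc ∫ y in Ioi x, |Ax y|
      ≤ ∫ y in Ioi x, (|a| * |F (x + y)| + |F' (x + y)| + ∫ t in Ioi x, |Ax t * F (t + y)|) :=
        integral_mono_of_nonneg (Eventually.of_forall fun _ => abs_nonneg _)
          (hF₁₂.add hJ)
          (ae_restrict_of_forall_mem measurableSet_Ioi fun y hy => hpt y (le_of_lt hy))
    _ = |a| * (∫ y in Ioi x, |F (x + y)|) + (∫ y in Ioi x, |F' (x + y)|) +
          ∫ y in Ioi x, ∫ t in Ioi x, |Ax t * F (t + y)| := by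
        rw [integral_add hF₁₂ hJ, integral_add hF₁ hF'₁, integral_const_mul]
    _ ≤ _ := by
        rw [hF'eq]
        gcongr
        · exact integral_abs_comp_const_add_le hF (le_refl x)
        · exact integral_integral_abs_mul_comp_add_le hAx hFmeas hF

theorem marchenko_Ax_L1_bound_general
    (F F' : ℝ → ℝ)
    (hFmeas : Measurable F)
    (hFbdd : ∀ x > (0 : ℝ), BddAbove ((fun y => |F y|) '' Set.Ici x))
    (hF'int : IntegrableOn (fun y => |F' y|) (Set.Ioi 0))
    (δ : ℝ) (hδ1 : δ < 1)
    (x : ℝ) (hx : 0 ≤ x)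
    (hσint : IntegrableOn (sigmaF F) (Set.Ioi (2 * x)))
    (hsmall : (∫ y in Set.Ioi (2 * x), sigmaF F y) ≤ δ)
    (A Ax : ℝ → ℝ)
    (hAbdd : BddAbove ((fun y => |A y|) '' Set.Ici x))
    (heq : ∀ y ≥ x, A y + ∫ t in Set.Ioi x, A t * F (t + y) = -F (x + y))
    (hAxint : IntegrableOn Ax (Set.Ioi x))
    (heq' : ∀ y ≥ x, Ax y + ∫ t in Set.Ioi x, Ax t * F (t + y)
      = A x * F (x + y) - F' (x + y)) :
    (∫ y in Set.Ioi x, |Ax y|) ≤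
      (1 - δ)⁻¹ * ((∫ y in Set.Ioi (2 * x), |F' y|) +
        (1 - δ)⁻¹ * sigmaF F (2 * x) * (∫ y in Set.Ioi (2 * x), sigmaF F y)) := by
  have hδ : 0 < 1 - δ := by linarith
  have hx₂ : 0 ≤ 2 * x := by linarith
  have hF := integrableOn_Ioi_of_sigmaF hFmeas hFbdd hx₂ hσint
  have hFσ := integral_abs_le_integral_sigmaF hFbdd hx₂ hσint
  have hFnonneg : 0 ≤ ∫ u in Ioi (2 * x), |F u| := integral_nonneg fun _ => abs_nonneg _
  have hAxnonneg : 0 ≤ ∫ y in Ioi x, |Ax y| := integral_nonneg fun _ => abs_nonneg _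
  have hA_diag : |A x| ≤ (1 - δ)⁻¹ * sigmaF F (2 * x) := by
    rw [inv_mul_eq_div, le_div_iff₀ hδ]
    calc |A x| * (1 - δ) ≤ sigmaF A x * (1 - ∫ u in Ioi (2 * x), |F u|) :=
          mul_le_mul (abs_le_sigmaF hAbdd le_rfl) (by linarith) hδ.le (sigmaF_nonneg hAbdd)
      _ ≤ sigmaF F (2 * x) := sigmaF_mul_one_sub_le_of_marchenko hF hAbdd heq
  have hmain := integral_abs_le_of_marchenko_deriv hFmeas hF
    (hF'int.mono_set (Ioi_subset_Ioi hx₂)) hAxint heq'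
  rw [inv_mul_eq_div, le_div_iff₀ hδ]
  calc (∫ y in Ioi x, |Ax y|) * (1 - δ)
      ≤ (∫ y in Ioi x, |Ax y|) * (1 - ∫ u in Ioi (2 * x), |F u|) :=
        mul_le_mul_of_nonneg_left (by linarith) hAxnonneg
    _ ≤ |A x| * (∫ u in Ioi (2 * x), |F u|) + ∫ u in Ioi (2 * x), |F' u| := by linarith
    _ ≤ _ := by
        have := mul_le_mul hA_diag hFσ hFnonneg ((abs_nonneg _).trans hA_diag)
        linarith

/-- bound on the `L¹` norm of the `x`-derivative of the Marchenko kernel: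
`∫_x^∞ |A_x(x,y)| dy ≤ (1−δ)⁻¹ [σ_{2F}(2x) + (1−δ)⁻¹ σ_F(2x) σ_{1F}(2x)]`. -/
theorem marchenko_Ax_L1_bound
    (F F' : ℝ → ℝ) (hFderiv : ∀ y > (0 : ℝ), HasDerivAt F (F' y) y)
    (hFmeas : Measurable F)
    (hFbdd : ∀ x > (0 : ℝ), BddAbove ((fun y => |F y|) '' Set.Ici x))
    (hF'int : IntegrableOn (fun y => |F' y|) (Set.Ioi 0))
    (δ : ℝ) (hδ0 : 0 ≤ δ) (hδ1 : δ < 1)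
    (x : ℝ) (hx : 0 ≤ x)
    (hσint : IntegrableOn (sigmaF F) (Set.Ioi (2 * x)))
    (hsmall : (∫ y in Set.Ioi (2 * x), sigmaF F y) ≤ δ)
    (A Ax : ℝ → ℝ) (hAmeas : Measurable A)
    (hAbdd : BddAbove ((fun y => |A y|) '' Set.Ici x))
    (heq : ∀ y ≥ x, A y + ∫ t in Set.Ioi x, A t * F (t + y) = -F (x + y))
    (hAxint : IntegrableOn Ax (Set.Ioi x))
    (heq' : ∀ y ≥ x, Ax y + ∫ t in Set.Ioi x, Ax t * F (t + y)
      = A x * F (x + y) - F' (x + y)) :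
    (∫ y in Set.Ioi x, |Ax y|) ≤
      (1 - δ)⁻¹ * ((∫ y in Set.Ioi (2 * x), |F' y|) +
        (1 - δ)⁻¹ * sigmaF F (2 * x) * (∫ y in Set.Ioi (2 * x), sigmaF F y)) :=
  marchenko_Ax_L1_bound_general F F' hFmeas hFbdd hF'int δ hδ1 x hx hσint hsmall A Ax hAbdd heq
    hAxint heq'
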